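/- arXiv:2212.03644 — 5 statements merged into one kernel-verified Lean document; each statement's English description precedes it below -/
import Mathlib

section
/- There is no 5-fold 1-perfect code in the Hamming graph H(3,4). (Indeed, although 5·4^3/((4-1)·3+1) = 32 is an integer, the Lloyd condition fails since 3 ≢ 1 (mod 4): a μ-fold 1-perfect code would force -1 to be an eigenvalue -3 + 4i of H(3,4) for some integer i, which is impossible.) -/
/-!
If every radius-1 ball meets `C` in 5 points, then `(I + A)(1_C - 1/2) = 0`. But the eigenvalues
of `I + A` on `H(3,4)` are `10 - 4i`, `i = 0, …, 3`, none of which vanishes since `3 ≢ 1 (mod 4)`.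
So `I + A` is invertible, its inverse is even an explicit radial kernel, and `1_C ≡ 1/2`, which
is absurd.
-/

open Matrix

theorem Matrix.mul_apply_eq_of_mulVec_eq_const_of_vecMul_eq_single {m n R : Type*} [Fintype m]
    [Fintype n] [DecidableEq n] [CommSemiring R] (B : Matrix m n R) {w : m → R} {f : n → R}
    {a c : R} {j : n} (hf : B *ᵥ f = fun _ => a) (hw : w ᵥ* B = Pi.single j c) :
    c * f j = a * ∑ i, w i := by
  have h := dotProduct_mulVec w B f
  rw [hf, hw, single_dotProduct] at h
  rw [← h, dotProduct, Finset.mul_sum]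
  exact Finset.sum_congr rfl fun i _ => mul_comm _ _

section HammingBall

variable {ι α : Type*} [Fintype ι] [DecidableEq α]

def hammingBallMatrix : Matrix (ι → α) (ι → α) ℤ :=
  fun x y => if hammingDist x y ≤ 1 then 1 else 0

theorem hammingBallMatrix_mulVec_indicator [DecidableEq ι] [Fintype α] (C : Set (ι → α))
    (x : ι → α) :
    (hammingBallMatrix *ᵥ C.indicator 1) x = Nat.card {y // y ∈ C ∧ hammingDist x y ≤ 1} := by
  classical
  rw [Nat.card_eq_fintype_card, Fintype.card_subtype, Finset.natCast_card_filter, mulVec,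
    dotProduct]
  refine Finset.sum_congr rfl fun y _ => ?_
  by_cases hy : y ∈ C <;> simp [hammingBallMatrix, hy]

end HammingBall

/-- `120 (I + A)⁻¹` on `H(3,4)`, as a function of the distance. -/
def hammingBallInverseWeight : ℕ → ℤ
  | 0 => 3
  | 1 => 13
  | 2 => -7
  | _ => 3

def hammingBallInverseRow (y : Fin 3 → Fin 4) : ℤ := hammingBallInverseWeight (hammingDist 0 y)

set_option maxRecDepth 10000 in
theorem hammingBallInverseRow_vecMul :
    hammingBallInverseRow ᵥ* hammingBallMatrix = Pi.single 0 120 := by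
  funext z
  rw [Pi.single_apply]
  revert z
  decide

set_option maxRecDepth 10000 in
theorem sum_hammingBallInverseRow : ∑ y, hammingBallInverseRow y = 12 := by
  decide

/-- There is no 5-fold 1-perfect code in the Hamming graph H(3,4). -/
theorem stmt_3 :
    ¬ ∃ C : Set (Fin 3 → Fin 4), C.Nonempty ∧ C ≠ Set.univ ∧
      ∀ x : Fin 3 → Fin 4,
        Nat.card {y : Fin 3 → Fin 4 // y ∈ C ∧ hammingDist x y ≤ 1} = 5 := by
  rintro ⟨C, -, -, hC⟩
  have hball : hammingBallMatrix *ᵥ C.indicator 1 = fun _ => 5 := by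
    funext x
    rw [hammingBallMatrix_mulVec_indicator, hC]
    rfl
  have key := Matrix.mul_apply_eq_of_mulVec_eq_const_of_vecMul_eq_single _ hball
    hammingBallInverseRow_vecMul
  rw [sum_hammingBallInverseRow] at key
  by_cases h0 : (0 : Fin 3 → Fin 4) ∈ C <;> simp [h0] at key
end

section
/- Let t ≤ m be positive integers and p a prime power. Then there exists a (p^t - 1)/(p - 1)-fold spread of F_p^m by t-dimensional subspaces: a collection of t-dimensional subspaces Y_1, ..., Y_N of F_p^m such that every nonzero vector of F_p^m lies in exactly (p^t-1)/(p-1) of them (counted with repetition of subspaces). -/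
/-!
Realise `K^m` as the degree-`m` extension `F` of `K` and fix a `t`-dimensional subspace `W ≤ F`.
Multiplying by `c ∈ Kˣ` fixes `W`, so the translates `v • W` are indexed by the points `[v]` of
`ℙ K F`. A nonzero `x` lies in `v • W` iff `x / v ∈ W`, so `[w] ↦ [x / w]` identifies `ℙ K W` with
the points whose translate contains `x`, and `ℙ K W` has `(q ^ t - 1) / (q - 1)` points, `q = #K`.
-/

open Module Pointwise
open scoped LinearAlgebra.Projectivization

namespace Submodule

variable {K F : Type*} [Field K] [Field F] [Algebra K F]

lemma algebraMap_smul_eq_self (W : Submodule K F) {c : K} (hc : c ≠ 0) :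
    algebraMap K F c • W = W := by
  apply le_antisymm
  · rintro _ ⟨w, hw, rfl⟩
    rw [DistribSMul.toLinearMap_apply, algebraMap_smul]
    exact W.smul_mem c hw
  · intro w hw
    refine (mem_smul_pointwise_iff_exists _ _ _).2 ⟨c⁻¹ • w, W.smul_mem _ hw, ?_⟩
    rw [smul_eq_mul, Algebra.smul_def, ← mul_assoc, ← map_mul, mul_inv_cancel₀ hc, map_one,
      one_mul]

lemma finrank_smul_of_ne_zero {v : F} (hv : v ≠ 0) (W : Submodule K F) :
    finrank K ↥(v • W) = finrank K W :=
  LinearEquiv.finrank_map_eq (DistribMulAction.toLinearEquiv K F (Units.mk0 v hv)) W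

noncomputable def spreadOf (W : Submodule K F) : ℙ K F → Submodule K F :=
  Projectivization.lift (fun v => (v : F) • W) fun a b t hab => by
    have ht : t ≠ 0 := by rintro rfl; exact a.2 (by simpa using hab)
    rw [hab, Algebra.smul_def, mul_smul, algebraMap_smul_eq_self _ ht]

variable (W : Submodule K F)

lemma mem_spreadOf_mk {v : F} (hv : v ≠ 0) (x : F) :
    x ∈ W.spreadOf (Projectivization.mk K v hv) ↔ ∃ w ∈ W, v * w = x :=
  mem_smul_pointwise_iff_exists x v W

lemma finrank_spreadOf (q : ℙ K F) : finrank K (W.spreadOf q) = finrank K W := by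
  induction q using Projectivization.ind with
  | h v hv => exact finrank_smul_of_ne_zero hv W

noncomputable def divPoint {x : F} (hx : x ≠ 0) : ℙ K W → ℙ K F :=
  Projectivization.lift (fun w => Projectivization.mk K (x * (w : F)⁻¹) (by simp [hx, w.2]))
    fun a b t hab => by
      rw [Projectivization.mk_eq_mk_iff']
      refine ⟨t⁻¹, ?_⟩
      have ht : t ≠ 0 := by rintro rfl; exact a.2 (by simpa using hab)
      rw [hab, coe_smul, Algebra.smul_def, Algebra.smul_def, map_inv₀]
      field_simp

lemma divPoint_mk {x : F} (hx : x ≠ 0) {w : W} (hw : w ≠ 0) :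
    W.divPoint hx (Projectivization.mk K w hw) =
      Projectivization.mk K (x * (w : F)⁻¹) (by simp [hx, hw]) :=
  rfl

lemma divPoint_injective {x : F} (hx : x ≠ 0) : Function.Injective (W.divPoint hx) := by
  intro a b hab
  induction a using Projectivization.ind with | h a ha =>
  induction b using Projectivization.ind with | h b hb =>
  rw [divPoint_mk, divPoint_mk, Projectivization.mk_eq_mk_iff'] at hab
  obtain ⟨c, hc⟩ := hab
  have ha' : (a : F) ≠ 0 := by simpa using ha
  have hb' : (b : F) ≠ 0 := by simpa using hb
  have hc0 : algebraMap K F c ≠ 0 := by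
    rintro h
    rw [Algebra.smul_def, h, zero_mul] at hc
    simp [hx, ha'] at hc
  refine (Projectivization.mk_eq_mk_iff' K _ _ _ _).2 ⟨c⁻¹, Subtype.ext ?_⟩
  rw [Algebra.smul_def] at hc
  rw [coe_smul, Algebra.smul_def, map_inv₀]
  field_simp at hc ⊢
  exact hc.symm

lemma range_divPoint {x : F} (hx : x ≠ 0) :
    Set.range (W.divPoint hx) = {q | x ∈ W.spreadOf q} := by
  ext q
  constructor
  · rintro ⟨p, rfl⟩
    induction p using Projectivization.ind with | h w hw =>
    have hw' : (w : F) ≠ 0 := by simpa using hw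
    rw [Set.mem_ofPred_eq, divPoint_mk, mem_spreadOf_mk]
    exact ⟨w, w.2, by field_simp⟩
  · induction q using Projectivization.ind with | h v hv =>
    intro hq
    obtain ⟨w, hw, rfl⟩ := (W.mem_spreadOf_mk hv _).1 hq
    have hw0 : w ≠ 0 := by rintro rfl; simp at hx
    refine ⟨Projectivization.mk K ⟨w, hw⟩ (by simpa using hw0), ?_⟩
    rw [divPoint_mk]
    congr 1
    field_simp

theorem natCard_setOf_mem_spreadOf {x : F} (hx : x ≠ 0) :
    Nat.card {q : ℙ K F // x ∈ W.spreadOf q} = Nat.card (ℙ K W) := by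
  rw [← Set.coe_ofPred, ← W.range_divPoint hx,
    Nat.card_range_of_injective (W.divPoint_injective hx)]

end Submodule

theorem exists_multifold_spread (K V : Type*) [Field K] [Finite K] [AddCommGroup V] [Module K V]
    [Module.Finite K V] {t : ℕ} (ht : t ≤ finrank K V) :
    ∃ (N : ℕ) (Y : Fin N → Submodule K V), (∀ i, finrank K (Y i) = t) ∧
      ∀ x : V, x ≠ 0 →
        Nat.card {i : Fin N // x ∈ Y i} = (Nat.card K ^ t - 1) / (Nat.card K - 1) := by
  obtain h0 | hpos := (finrank K V).eq_zero_or_pos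
  · have : Subsingleton V := Module.finrank_zero_iff.1 h0
    exact ⟨0, Fin.elim0, Fin.rec0, fun x hx => (hx (Subsingleton.elim x 0)).elim⟩
  have : NeZero (finrank K V) := ⟨hpos.ne'⟩
  have : Fact (ringChar K).Prime := ⟨CharP.char_is_prime K _⟩
  let F := FiniteField.Extension K (ringChar K) (finrank K V)
  have hF : finrank K F = finrank K V := FiniteField.finrank_extension ..
  let e : F ≃ₗ[K] V := LinearEquiv.ofFinrankEq _ _ hF
  obtain ⟨y, hy⟩ := exists_linearIndependent_of_le_finrank (ht.trans_eq hF.symm)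
  let W := Submodule.span K (Set.range y)
  have hW : finrank K W = t := by simpa using finrank_span_eq_card hy
  let σ := Finite.equivFin (ℙ K F)
  refine ⟨Nat.card (ℙ K F), fun i => (W.spreadOf (σ.symm i)).map (e : F →ₗ[K] V),
    fun i => ?_, fun x hx => ?_⟩
  · rw [LinearEquiv.finrank_map_eq, Submodule.finrank_spreadOf, hW]
  · have hx' : e.symm x ≠ 0 := by simpa using hx
    calc Nat.card {i // x ∈ (W.spreadOf (σ.symm i)).map (e : F →ₗ[K] V)}
        = Nat.card {q // e.symm x ∈ W.spreadOf q} :=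
          Nat.card_congr (σ.symm.subtypeEquiv fun _ => Submodule.mem_map_equiv _)
      _ = Nat.card (ℙ K W) := W.natCard_setOf_mem_spreadOf hx'
      _ = (Nat.card K ^ t - 1) / (Nat.card K - 1) := by
          rw [Projectivization.card'', Module.natCard_eq_pow_finrank (K := K), hW]

theorem stmt_8_general (p t m : ℕ) (K : Type) [Field K] [Fintype K]
    (hK : Fintype.card K = p) (htm : t ≤ m) :
    ∃ (N : ℕ) (Y : Fin N → Submodule K (Fin m → K)),
      (∀ i, Module.finrank K (Y i) = t) ∧
      ∀ x : Fin m → K, x ≠ 0 →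
        Nat.card {i : Fin N // x ∈ Y i} = (p ^ t - 1) / (p - 1) := by
  rw [← hK, ← Nat.card_eq_fintype_card]
  exact exists_multifold_spread K (Fin m → K) (by simpa using htm)

/-- For t ≤ m there exists a (p^t-1)/(p-1)-fold spread of F_p^m by
    t-dimensional subspaces. -/
theorem stmt_8 (p t m : ℕ) (K : Type) [Field K] [Fintype K] [DecidableEq K]
    (hK : Fintype.card K = p) (ht : 0 < t) (htm : t ≤ m) :
    ∃ (N : ℕ) (Y : Fin N → Submodule K (Fin m → K)),
      (∀ i, Module.finrank K (Y i) = t) ∧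
      ∀ x : Fin m → K, x ≠ 0 →
        Nat.card {i : Fin N // x ∈ Y i} = (p ^ t - 1) / (p - 1) :=
  stmt_8_general p t m K hK htm
end

section
/- Let t divide m + s, and suppose S_1, ..., S_n are t-dimensional subspaces of F_p^{m+s} whose nonzero vectors partition F_p^{m+s} \ {0} (a spread, so n = (p^{m+s}-1)/(p^t-1)). Let π : F_p^{m+s} → F_p^m be the projection forgetting the last s coordinates. Then (π(S_1), ..., π(S_n)), taken as multisets, is a (p^s - 1, p^s)-spread of t-multisubspaces of F_p^m. -/
/-!
A vector of `F_p^{m+s}` lying over `u ∈ F_p^m` contributes to the multiset `π(S_i)` once for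
every `S_i` containing it. A nonzero vector lies in exactly one `S_i` and the zero vector in all
`n` of them, so the total multiplicity of `u` is the fiber size `p^s` when `u ≠ 0`, and
`n + (p^s - 1)` when `u = 0`.
-/

open Finset

section CoveringCount

variable {ι V : Type*} [Fintype ι]
  (S : ι → Set V) [∀ i, DecidablePred (· ∈ S i)]

lemma card_filter_mem_eq_one {v : V} (hv : ∃! i, v ∈ S i) : #{i | v ∈ S i} = 1 := by
  obtain ⟨i, hi, huniq⟩ := hv
  exact card_eq_one.2 ⟨i, by ext j; simpa using ⟨huniq j, fun h => h ▸ hi⟩⟩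

lemma sum_card_filter_mem_eq_sum_card (F : Finset V) :
    ∑ i, #{v ∈ F | v ∈ S i} = ∑ v ∈ F, #{i | v ∈ S i} :=
  sum_card_bipartiteAbove_eq_sum_card_bipartiteBelow (fun i v => v ∈ S i)

variable [Zero V] {S} (hS : ∀ v, v ≠ 0 → ∃! i, v ∈ S i) {F : Finset V}
include hS

lemma sum_card_filter_mem_of_zero_notMem (hF : (0 : V) ∉ F) :
    ∑ i, #{v ∈ F | v ∈ S i} = #F := by
  rw [sum_card_filter_mem_eq_sum_card, card_eq_sum_ones]
  exact sum_congr rfl fun v hv => card_filter_mem_eq_one S (hS v (ne_of_mem_of_not_mem hv hF))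

lemma sum_card_filter_mem_of_zero_mem [DecidableEq V] (h0 : ∀ i, (0 : V) ∈ S i)
    (hF : (0 : V) ∈ F) :
    ∑ i, #{v ∈ F | v ∈ S i} = Fintype.card ι + (#F - 1) := by
  rw [sum_card_filter_mem_eq_sum_card, ← add_sum_erase _ _ hF, filter_true_of_mem fun i _ => h0 i,
    card_univ, ← card_erase_of_mem hF, card_eq_sum_ones]
  exact congrArg _ <| sum_congr rfl fun v hv => card_filter_mem_eq_one S (hS v (ne_of_mem_erase hv))

end CoveringCount

lemma card_filter_castAdd_eq {α : Type*} [Fintype α] [DecidableEq α] {m : ℕ} (s : ℕ)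
    (u : Fin m → α) :
    #{v : Fin (m + s) → α | (fun j => v (Fin.castAdd s j)) = u} = Fintype.card α ^ s := by
  have happend_inj : Function.Injective (Fin.append u : (Fin s → α) → _) := fun w w' h => by
    funext j; simpa using congrFun h (Fin.natAdd m j)
  have hfiber : ({v | (fun j => v (Fin.castAdd s j)) = u} : Finset (Fin (m + s) → α)) =
      (univ : Finset (Fin s → α)).map ⟨_, happend_inj⟩ := by
    ext v
    simp only [mem_filter, mem_univ, true_and, mem_map, Function.Embedding.coeFn_mk]
    constructor
    · rintro rfl; exact ⟨_, Fin.append_castAdd_natAdd⟩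
    · rintro ⟨w, rfl⟩; funext j; simp
  rw [hfiber, card_map, card_univ, Fintype.card_fun, Fintype.card_fin]

theorem stmt_10_general (p m s n : ℕ) (K : Type) [Field K] [Fintype K] [DecidableEq K]
    (hK : Fintype.card K = p)
    (S : Fin n → Submodule K (Fin (m + s) → K))
    (hpart : ∀ v : Fin (m + s) → K, v ≠ 0 → ∃! i, v ∈ S i) :
    ∀ u : Fin m → K,
      (∑ i, Nat.card {v : Fin (m + s) → K //
          v ∈ S i ∧ (fun j : Fin m => v (Fin.castAdd s j)) = u})
        = if u = 0 then n + (p ^ s - 1) else p ^ s := by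
  classical
  intro u
  set F := ({v | (fun j => v (Fin.castAdd s j)) = u} : Finset (Fin (m + s) → K))
  have hF : #F = p ^ s := hK ▸ card_filter_castAdd_eq s u
  have hcard : ∀ i, Nat.card {v : Fin (m + s) → K //
      v ∈ S i ∧ (fun j : Fin m => v (Fin.castAdd s j)) = u} =
        #{v ∈ F | v ∈ (S i : Set _)} := by
    intro i
    rw [Nat.card_eq_fintype_card, Fintype.card_subtype, filter_filter]
    simp [and_comm]
  simp only [hcard]
  split_ifs with hu
  · subst hu
    have h0F : (0 : Fin (m + s) → K) ∈ F := by simp [F, funext_iff]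
    rw [sum_card_filter_mem_of_zero_mem hpart (fun i => (S i).zero_mem) h0F, hF, Fintype.card_fin]
  · rw [sum_card_filter_mem_of_zero_notMem hpart (by simpa [F, funext_iff] using Ne.symm hu), hF]

/-- Projecting a spread of F_p^{m+s} by t-dimensional subspaces along the last s
    coordinates yields a (p^s - 1, p^s)-spread of t-multisubspaces of F_p^m. -/
theorem stmt_10 (p t m s n : ℕ) (K : Type) [Field K] [Fintype K] [DecidableEq K]
    (hK : Fintype.card K = p) (ht : 0 < t) (hts : t ∣ m + s)
    (S : Fin n → Submodule K (Fin (m + s) → K))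
    (hdim : ∀ i, Module.finrank K (S i) = t)
    (hpart : ∀ v : Fin (m + s) → K, v ≠ 0 → ∃! i, v ∈ S i)
    (hn : n = (p ^ (m + s) - 1) / (p ^ t - 1)) :
    ∀ u : Fin m → K,
      (∑ i, Nat.card {v : Fin (m + s) → K //
          v ∈ S i ∧ (fun j : Fin m => v (Fin.castAdd s j)) = u})
        = if u = 0 then n + (p ^ s - 1) else p ^ s :=
  stmt_10_general p m s n K hK S hpart
end

section
/- Let p be a prime, q = p^t, and let M = M(T_1,...,T_n) be an m × nt matrix over F_p whose columns, grouped into n blocks T_1,...,T_n of t columns each, span F_p^m. Then the F_p-linear code C = ker M ⊆ F_p^{nt}, viewed as a code in H(n, p^t) by grouping coordinates into n blocks of length t, is completely regular with covering radius 1 and quotient matrix [[λ, n(q-1)-λ],[μ, n(q-1)-μ]] if and only if (⟨T_1⟩, ..., ⟨T_n⟩) is a (λ,μ)-spread of F_p^m. -/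
noncomputable def spanCount {K : Type} [Field K] {m t : ℕ} (T : Fin t → Fin m → K)
    (u : Fin m → K) : ℕ :=
  Nat.card {a : Fin t → K // ∑ j, a j • T j = u}

def IsMultispread {K : Type} [Field K] [DecidableEq K] {m t n : ℕ}
    (T : Fin n → Fin t → Fin m → K) (lam mu : ℕ) : Prop :=
  ∀ u : Fin m → K, (∑ i, spanCount (T i) u) = if u = 0 then n + lam else mu

/-- The syndrome M(T₁,…,Tₙ)·x of a vertex x of H(n,p^t), viewed as n blocks of
    t coordinates over F_p. -/
def synd {p t m n : ℕ} [Fact p.Prime] (T : Fin n → Fin t → Fin m → ZMod p)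
    (x : Fin n → Fin t → ZMod p) : Fin m → ZMod p :=
  ∑ i, ∑ j, x i j • T i j


/-!
The neighbours of `x` in `H(n, p^t)` are the vectors `x + Pi.single i a` with `a ≠ 0`, and such a
neighbour lies in `C = ker M` iff `∑ j, a j • T i j = -M x`. Hence `x` has
`∑ i, #{a ≠ 0 | T_i a = -M x}` neighbours in `C`, which is `∑ i, spanCount (T i) (-M x)` minus
`n` when `x ∈ C` (the zero combinations). As `M` is onto, `-M x` runs over all of `F_p^m`.
-/

open Finset

section Hamming

variable {ι : Type*} [Fintype ι] [DecidableEq ι] {β : ι → Type*} [∀ i, DecidableEq (β i)]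

theorem hammingNorm_eq_one_iff [∀ i, Zero (β i)] {x : ∀ i, β i} :
    hammingNorm x = 1 ↔ ∃ i, ∃ a ≠ 0, Pi.single i a = x := by
  constructor
  · intro h
    obtain ⟨i, hi⟩ := card_eq_one.mp h
    have hsupp : ∀ k, x k ≠ 0 ↔ k = i := fun k => by
      simpa using congrArg (k ∈ ·) hi
    refine ⟨i, x i, (hsupp i).2 rfl, funext fun k => ?_⟩
    by_cases hk : k = i
    · subst hk; simp
    · simpa [hk, eq_comm] using (not_congr (hsupp k)).2 hk
  · rintro ⟨i, a, ha, rfl⟩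
    refine card_eq_one.mpr ⟨i, ?_⟩
    ext k
    by_cases hk : k = i
    · subst hk; simp [ha]
    · simp [hk]

theorem hammingDist_eq_one_iff [∀ i, AddGroup (β i)] {x y : ∀ i, β i} :
    hammingDist x y = 1 ↔ ∃ i, ∃ a ≠ 0, y = x + Pi.single i a := by
  rw [hammingDist_eq_hammingNorm, hammingNorm_eq_one_iff]
  simp only [eq_neg_add_iff_add_eq, eq_comm (a := y)]

theorem card_neighbors_eq_sum [∀ i, AddGroup (β i)] [∀ i, Finite (β i)]
    (P : (∀ i, β i) → Prop) (x : ∀ i, β i) :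
    Nat.card {y // P y ∧ hammingDist x y = 1}
      = ∑ i, Nat.card {a : β i // a ≠ 0 ∧ P (x + Pi.single i a)} := by
  rw [← Nat.card_sigma]
  symm
  refine Nat.card_congr (Equiv.ofBijective
    (fun s => ⟨x + Pi.single s.1 s.2, s.2.2.2,
      hammingDist_eq_one_iff.2 ⟨_, _, s.2.2.1, rfl⟩⟩) ⟨?_, ?_⟩)
  · rintro ⟨i, a, ha, _⟩ ⟨j, b, hb, _⟩ h
    have hab : Pi.single i (a : β i) = Pi.single j b := add_left_cancel (congrArg Subtype.val h)
    obtain rfl : i = j := by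
      by_contra hij
      exact ha (by simpa [hij] using congrFun hab i)
    obtain rfl := Pi.single_injective i hab
    rfl
  · rintro ⟨y, hy, hd⟩
    obtain ⟨i, a, ha, rfl⟩ := hammingDist_eq_one_iff.1 hd
    exact ⟨⟨i, a, ha, hy⟩, rfl⟩

end Hamming

theorem Nat.card_subtype_ne_zero_add_ite {α : Type*} [Zero α] [Finite α] (P : α → Prop)
    [Decidable (P 0)] :
    Nat.card {a // a ≠ 0 ∧ P a} + (if P 0 then 1 else 0) = Nat.card {a // P a} := by
  have hdiff : ({a | a ≠ 0 ∧ P a} : Set α) = {a | P a} \ {0} := by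
    ext a; simp [and_comm]
  change Nat.card ({a | a ≠ 0 ∧ P a} : Set α) + _ = Nat.card ({a | P a} : Set α)
  rw [Nat.card_coe_set_eq, Nat.card_coe_set_eq, hdiff]
  split_ifs with h0
  · exact Set.ncard_sdiff_singleton_add_one h0
  · rw [Set.sdiff_singleton_eq_self (show (0 : α) ∉ {a | P a} from h0), add_zero]

theorem card_ne_zero_add_ite_eq_spanCount {K : Type} [Field K] [DecidableEq K] [Finite K]
    {m t : ℕ} (T : Fin t → Fin m → K) (u : Fin m → K) :
    Nat.card {a : Fin t → K // a ≠ 0 ∧ ∑ j, a j • T j = u} + (if u = 0 then 1 else 0)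
      = spanCount T u := by
  rw [spanCount]
  have := Nat.card_subtype_ne_zero_add_ite (fun a : Fin t → K => ∑ j, a j • T j = u)
  simpa [eq_comm (a := (0 : Fin m → K))] using this

section Syndrome

variable {p t m n : ℕ} [Fact p.Prime] (T : Fin n → Fin t → Fin m → ZMod p)

theorem synd_add_single (x : Fin n → Fin t → ZMod p) (i : Fin n) (a : Fin t → ZMod p) :
    synd T (x + Pi.single i a) = synd T x + ∑ j, a j • T i j := by
  simp [synd, add_smul, sum_add_distrib, Pi.single_apply, ite_apply, ite_smul]

theorem synd_surjective
    (hspan : Submodule.span (ZMod p) (Set.range fun ij : Fin n × Fin t => T ij.1 ij.2) = ⊤) :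
    Function.Surjective (synd T) := by
  intro u
  obtain ⟨c, hc⟩ := (Submodule.mem_span_range_iff_exists_fun (ZMod p)).mp
    (hspan ▸ Submodule.mem_top : u ∈ Submodule.span (ZMod p) _)
  exact ⟨fun i j => c (i, j), by rw [← hc, synd, Fintype.sum_prod_type]⟩

theorem card_kernel_neighbors_add_ite (x : Fin n → Fin t → ZMod p) :
    Nat.card {y // synd T y = 0 ∧ hammingDist x y = 1} + (if synd T x = 0 then n else 0)
      = ∑ i, spanCount (T i) (-synd T x) := by
  simp_rw [card_neighbors_eq_sum, synd_add_single, add_eq_zero_iff_eq_neg',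
    ← card_ne_zero_add_ite_eq_spanCount, sum_add_distrib, neg_eq_zero]
  split_ifs <;> simp

end Syndrome

theorem stmt_12_general (p t m n lam mu : ℕ) [hp : Fact p.Prime]
    (T : Fin n → Fin t → Fin m → ZMod p)
    (hspan : Submodule.span (ZMod p)
        (Set.range fun ij : Fin n × Fin t => T ij.1 ij.2) = ⊤) :
    ((∀ x : Fin n → Fin t → ZMod p, synd T x = 0 →
        Nat.card {y : Fin n → Fin t → ZMod p //
          synd T y = 0 ∧ hammingDist x y = 1} = lam) ∧
     (∀ x : Fin n → Fin t → ZMod p, synd T x ≠ 0 →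
        Nat.card {y : Fin n → Fin t → ZMod p //
          synd T y = 0 ∧ hammingDist x y = 1} = mu))
    ↔ IsMultispread T lam mu := by
  constructor
  · rintro ⟨hC, hnotC⟩ u
    obtain ⟨x, hx⟩ := synd_surjective T hspan (-u)
    obtain rfl : -synd T x = u := neg_eq_iff_eq_neg.mpr hx
    rw [← card_kernel_neighbors_add_ite]
    simp only [neg_eq_zero]
    by_cases hxC : synd T x = 0
    · rw [if_pos hxC, if_pos hxC, hC x hxC, add_comm]
    · rw [if_neg hxC, if_neg hxC, hnotC x hxC, add_zero]
  · intro hS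
    refine ⟨fun x hx => ?_, fun x hx => ?_⟩
    · have := card_kernel_neighbors_add_ite T x
      rw [hS, if_pos (neg_eq_zero.mpr hx), if_pos hx] at this
      omega
    · have := card_kernel_neighbors_add_ite T x
      rwa [hS, if_neg (neg_ne_zero.mpr hx), if_neg hx, add_zero] at this

/-- ker M(T₁,…,Tₙ) is completely regular of covering radius 1 with quotient
    matrix [[λ, n(q-1)-λ],[μ, n(q-1)-μ]] iff (⟨T₁⟩,…,⟨Tₙ⟩) is a (λ,μ)-spread.
    (Vertices are adjacent iff they differ in exactly one block.) -/
theorem stmt_12 (p t m n lam mu : ℕ) [hp : Fact p.Prime] (ht : 0 < t)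
    (T : Fin n → Fin t → Fin m → ZMod p)
    (hspan : Submodule.span (ZMod p)
        (Set.range fun ij : Fin n × Fin t => T ij.1 ij.2) = ⊤) :
    ((∀ x : Fin n → Fin t → ZMod p, synd T x = 0 →
        Nat.card {y : Fin n → Fin t → ZMod p //
          synd T y = 0 ∧ hammingDist x y = 1} = lam) ∧
     (∀ x : Fin n → Fin t → ZMod p, synd T x ≠ 0 →
        Nat.card {y : Fin n → Fin t → ZMod p //
          synd T y = 0 ∧ hammingDist x y = 1} = mu))
    ↔ IsMultispread T lam mu :=
  stmt_12_general p t m n lam mu (hp := hp) T hspan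
end

section
/- Let q = p^t with p prime, and suppose (⟨T_1⟩,...,⟨T_n⟩) is a (μ-1, μ)-spread of t-multisubspaces of F_p^m whose underlying vectors span F_p^m. Then ker M(T_1,...,T_n) is an F_p-linear μ-fold 1-perfect code in H(n, q): every radius-1 ball in H(n,q) contains exactly μ codewords. -/
open Finset Function

section Hamming
variable {ι : Type*} [Fintype ι] [DecidableEq ι] {β : ι → Type*} [∀ i, DecidableEq (β i)]

theorem hammingDist_update_of_ne {x : ∀ i, β i} {i : ι} {b : β i} (hb : b ≠ x i) :
    hammingDist x (update x i b) = 1 := by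
  rw [hammingDist, card_eq_one]
  refine ⟨i, eq_singleton_iff_unique_mem.2 ⟨by simpa using hb.symm, fun j hj => ?_⟩⟩
  by_contra hji
  simp [update_of_ne hji] at hj

theorem exists_eq_update_of_hammingDist_eq_one {x y : ∀ i, β i} (h : hammingDist x y = 1) :
    ∃ i, y i ≠ x i ∧ y = update x i (y i) := by
  obtain ⟨i, hi⟩ := card_eq_one.1 h
  have hdiff : ∀ j, x j ≠ y j ↔ j = i := fun j => by
    simpa using congrArg (j ∈ ·) hi
  refine ⟨i, fun h => (hdiff i).2 rfl h.symm, funext fun j => ?_⟩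
  rcases eq_or_ne j i with rfl | hji
  · simp
  · rw [update_of_ne hji]
    exact not_not.1 (mt (hdiff j).1 hji) |>.symm

variable [∀ i, Fintype (β i)]

theorem card_filter_hammingDist_eq_one (x : ∀ i, β i) (P : (∀ i, β i) → Prop)
    [DecidablePred P] :
    #{y | P y ∧ hammingDist x y = 1} = ∑ i, #{b : β i | b ≠ x i ∧ P (update x i b)} := by
  rw [← card_sigma]
  symm
  refine card_bij (fun ib _ => update x ib.1 ib.2) ?_ ?_ ?_
  · rintro ⟨i, b⟩ hb
    simp only [mem_sigma, mem_univ, mem_filter, true_and] at hb ⊢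
    exact ⟨hb.2, hammingDist_update_of_ne hb.1⟩
  · rintro ⟨i, b⟩ hb ⟨i', b'⟩ hb' h
    simp only [mem_sigma, mem_univ, mem_filter, true_and] at hb hb'
    obtain rfl : i = i' := by
      by_contra hii
      exact hb.1 (by simpa [update_of_ne hii] using congrFun h i)
    simpa using congrFun h i
  · intro y hy
    simp only [mem_filter, mem_univ, true_and] at hy
    obtain ⟨i, hi, hy'⟩ := exists_eq_update_of_hammingDist_eq_one hy.2
    exact ⟨⟨i, y i⟩, by simp [hi, ← hy', hy.1], hy'.symm⟩

theorem card_filter_hammingDist_le_one_add (x : ∀ i, β i) (P : (∀ i, β i) → Prop)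
    [DecidablePred P] :
    #{y | P y ∧ hammingDist x y ≤ 1} + Fintype.card ι * (if P x then 1 else 0)
      = (if P x then 1 else 0) + ∑ i, #{b : β i | P (update x i b)} := by
  have hsplit : #{y | P y ∧ hammingDist x y ≤ 1}
      = (if P x then 1 else 0) + #{y | P y ∧ hammingDist x y = 1} := by
    have hzero : #{y | P y ∧ hammingDist x y = 0} = if P x then 1 else 0 := by
      split_ifs with hP <;>
        simp [hammingDist_eq_zero, eq_comm (a := x), filter_and, filter_eq', hP]
    rw [← hzero, ← card_union_of_disjoint (disjoint_filter.2 fun y _ h0 h1 => by omega),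
      ← filter_or]
    simp only [Nat.le_one_iff_eq_zero_or_eq_one, and_or_left]
  have hline : ∀ i, #{b : β i | P (update x i b)}
      = #{b : β i | b ≠ x i ∧ P (update x i b)} + if P x then 1 else 0 := by
    intro i
    split_ifs with hP
    · rw [← card_erase_add_one (a := x i) (by simpa using hP)]
      congr 2
      ext b
      simp
    · rw [add_zero]
      congr 1
      ext b
      simp only [mem_filter, mem_univ, true_and, iff_and_self]
      rintro h rfl
      exact hP (by simpa using h)
  rw [hsplit, card_filter_hammingDist_eq_one, sum_congr rfl fun i _ => hline i, sum_add_distrib,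
    sum_const, card_univ, smul_eq_mul]
  ring

end Hamming

section Syndrome
variable {p t m n : ℕ} [Fact p.Prime] (T : Fin n → Fin t → Fin m → ZMod p)

theorem synd_update (x : Fin n → Fin t → ZMod p) (i : Fin n) (b : Fin t → ZMod p) :
    synd T (update x i b) = synd T x + ∑ j, (b j - x i j) • T i j := by
  rw [← sub_eq_iff_eq_add', synd, synd, ← sum_sub_distrib, sum_eq_single i]
  · simp [← sum_sub_distrib, sub_smul]
  · intro k _ hk
    simp [update_of_ne hk]
  · simp

theorem card_filter_synd_update_eq_zero (x : Fin n → Fin t → ZMod p) (i : Fin n) :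
    #{b | synd T (update x i b) = 0} = spanCount (T i) (-synd T x) := by
  rw [spanCount, ← Fintype.card_subtype, ← Nat.card_eq_fintype_card]
  refine Nat.card_congr ((Equiv.subRight (x i)).subtypeEquiv fun b => ?_)
  rw [synd_update, add_eq_zero_iff_eq_neg', Equiv.subRight_apply]
  rfl

end Syndrome

theorem stmt_13_general (p t m n μ : ℕ) [hp : Fact p.Prime]
    (T : Fin n → Fin t → Fin m → ZMod p)
    (hms : IsMultispread T (μ - 1) μ) (hμ : 1 ≤ μ) :
    ∀ x : Fin n → Fin t → ZMod p,
      Nat.card {y : Fin n → Fin t → ZMod p //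
        synd T y = 0 ∧ hammingDist x y ≤ 1} = μ := by
  intro x
  have hball := card_filter_hammingDist_le_one_add x (synd T · = 0)
  simp only [card_filter_synd_update_eq_zero, hms (-synd T x), neg_eq_zero,
    Fintype.card_fin] at hball
  rw [Nat.card_eq_fintype_card, Fintype.card_subtype]
  split_ifs at hball <;> omega

/-- If (⟨T₁⟩,…,⟨Tₙ⟩) is a (μ-1,μ)-spread whose vectors span F_p^m, then
    ker M(T₁,…,Tₙ) is a μ-fold 1-perfect code in H(n,p^t): every radius-1 ball
    contains exactly μ codewords. -/
theorem stmt_13 (p t m n μ : ℕ) [hp : Fact p.Prime] (ht : 0 < t)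
    (T : Fin n → Fin t → Fin m → ZMod p)
    (hspan : Submodule.span (ZMod p)
        (Set.range fun ij : Fin n × Fin t => T ij.1 ij.2) = ⊤)
    (hms : IsMultispread T (μ - 1) μ) (hμ : 1 ≤ μ) :
    ∀ x : Fin n → Fin t → ZMod p,
      Nat.card {y : Fin n → Fin t → ZMod p //
        synd T y = 0 ∧ hammingDist x y ≤ 1} = μ :=
  stmt_13_general p t m n μ (hp := hp) T hms hμ
end
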